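/- For every M > 0 there exist constants K > 0 and h₀ > 0, depending only on M, with the following property. Let a < b with h := (b − a)/4 ≤ h₀, and let x : [a, b] → ℝ² be five times continuously differentiable and unit-speed (‖ẋ(t)‖ = 1 for all t), with ‖x⁽ᵐ⁾(t)‖ ≤ M for all t ∈ [a, b] and all 2 ≤ m ≤ 5. Define w̃₂ := (3/(8h))·(x(b) − x(a)) − (1/4)·(ẋ(a) + ẋ(b)), ṽ₂ := w̃₂/‖w̃₂‖, w̃₁₃ := (3/(8h))·(x(b) − x(a)) − (1/8)·(ẋ(a) + ẋ(b)) − (1/4)·ṽ₂, w̃₁ := w̃₁₃ − (1/4)·(ẋ(b) − ẋ(a)), and w̃₃ := w̃₁₃ + (1/4)·(ẋ(b) − ẋ(a)). Then w̃₂, w̃₁, w̃₃ are all nonzero, and ‖ẋ(a + h) − w̃₁/‖w̃₁‖‖ ≤ K·h³ and ‖ẋ(a + 3h) − w̃₃/‖w̃₃‖‖ ≤ K·h³. -/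

import Mathlib

/-!
Expand `x` about the midpoint `c = a + 2h` to fourth order. The rule defining `w̃₂` is exact
for quartic curves, so `w̃₂ = ẋ(c) + O(h⁴)`, and since `‖ẋ(c)‖ = 1` normalising at most doubles
the error. With `ṽ₂` in place of `ẋ(c)`, the rules defining `w̃₁` and `w̃₃` are exact for cubic
velocities up to the term `∓ (h³/2) x⁽⁴⁾(c)`, which is the `O(h³)` error. For small `h` all these
errors are below `1`, so none of the vectors vanishes.
-/

open Set
open scoped Nat

variable {E : Type*} [NormedAddCommGroup E] [NormedSpace ℝ E]

/-- Taylor polynomial at `c`, with `X k` in the role of the `k`-th derivative. -/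
noncomputable def taylorSum (X : ℕ → ℝ → E) (n : ℕ) (c t : ℝ) : E :=
  ∑ k ∈ Finset.range n, ((t - c) ^ k / k !) • X k c

theorem taylorSum_succ_self (X : ℕ → ℝ → E) (n : ℕ) (c : ℝ) :
    taylorSum X (n + 1) c c = X 0 c := by
  simp [taylorSum, Finset.sum_range_succ']

theorem hasDerivAt_taylorSum_succ (X : ℕ → ℝ → E) (n : ℕ) (c t : ℝ) :
    HasDerivAt (taylorSum X (n + 1) c) (taylorSum (fun k ↦ X (k + 1)) n c t) t := by
  have hterm (k : ℕ) : HasDerivAt (fun t ↦ ((t - c) ^ (k + 1) / (k + 1)!) • X (k + 1) c)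
      (((t - c) ^ k / k !) • X (k + 1) c) t := by
    have := ((((hasDerivAt_id t).sub_const c).fun_pow (k + 1)).div_const
      ((k + 1)! : ℝ)).smul_const (X (k + 1) c)
    convert this using 2
    · simp
    · simp only [id, Nat.add_sub_cancel, Nat.factorial_succ, Nat.cast_mul]
      field_simp
  have hsum := (HasDerivAt.fun_sum (u := Finset.range n) fun k _ ↦ hterm k).add_const (X 0 c)
  unfold taylorSum
  convert hsum using 1
  funext u
  simp [Finset.sum_range_succ']

theorem norm_sub_taylorSum_le {X : ℕ → ℝ → E} {s : Set ℝ} (hs : Convex ℝ s) {n : ℕ}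
    {c C L : ℝ} (hX : ∀ k < n, ∀ t ∈ s, HasDerivWithinAt (X k) (X (k + 1) t) s t)
    (hc : c ∈ s) (hL : ∀ t ∈ s, |t - c| ≤ L) (hC : ∀ t ∈ s, ‖X n t‖ ≤ C) :
    ∀ t ∈ s, ‖X 0 t - taylorSum X n c t‖ ≤ C * L ^ n := by
  induction n generalizing X with
  | zero => simpa [taylorSum] using hC
  | succ n ih =>
    intro t ht
    have hrem := ih (X := fun k ↦ X (k + 1)) (fun k hk ↦ hX (k + 1) (by omega)) hC
    have hderiv (u) (hu : u ∈ s) : HasDerivWithinAt (fun u ↦ X 0 u - taylorSum X (n + 1) c u)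
        (X 1 u - taylorSum (fun k ↦ X (k + 1)) n c u) s u :=
      (hX 0 n.succ_pos u hu).sub (hasDerivAt_taylorSum_succ X n c u).hasDerivWithinAt
    have hmvt := hs.norm_image_sub_le_of_norm_hasDerivWithin_le hderiv hrem hc ht
    have hCL : 0 ≤ C * L ^ n := hrem c hc |>.trans' (norm_nonneg _)
    rw [taylorSum_succ_self, sub_self, sub_zero, Real.norm_eq_abs] at hmvt
    calc _ ≤ C * L ^ n * |t - c| := hmvt
      _ ≤ C * L ^ n * L := mul_le_mul_of_nonneg_left (hL t ht) hCL
      _ = C * L ^ (n + 1) := by ring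

theorem norm_inv_norm_smul_sub_le {u v : E} (hv : ‖v‖ = 1) :
    ‖‖u‖⁻¹ • u - v‖ ≤ 2 * ‖u - v‖ := by
  have hnormalize : ‖‖u‖⁻¹ • u - u‖ ≤ |‖v‖ - ‖u‖| := by
    rcases eq_or_ne u 0 with rfl | hu
    · simp
    have hu' : 0 < ‖u‖ := norm_pos_iff.2 hu
    rw [show ‖u‖⁻¹ • u - u = (‖u‖⁻¹ - 1) • u by rw [sub_smul, one_smul], norm_smul,
      Real.norm_eq_abs, hv, ← abs_of_pos hu', ← abs_mul, abs_of_pos hu', sub_mul,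
      inv_mul_cancel₀ hu'.ne', one_mul]
  calc ‖‖u‖⁻¹ • u - v‖ ≤ ‖‖u‖⁻¹ • u - u‖ + ‖u - v‖ := norm_sub_le_norm_sub_add_norm_sub _ _ _
    _ ≤ |‖v‖ - ‖u‖| + ‖u - v‖ := by gcongr
    _ ≤ 2 * ‖u - v‖ := by linarith [abs_norm_sub_norm_le v u, norm_sub_rev v u]

theorem ne_zero_and_norm_sub_inv_norm_smul_le {u v : E} {δ : ℝ} (hv : ‖v‖ = 1)
    (huv : ‖u - v‖ ≤ δ) (hδ : δ < 1) : u ≠ 0 ∧ ‖v - ‖u‖⁻¹ • u‖ ≤ 2 * δ := by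
  refine ⟨?_, ?_⟩
  · rintro rfl
    rw [zero_sub, norm_neg, hv] at huv
    linarith
  · rw [norm_sub_rev]
    linarith [norm_inv_norm_smul_sub_le (u := u) hv]

theorem add_mul_mem_Icc {a h r n : ℝ} (hh : 0 ≤ h) (hr₀ : 0 ≤ r) (hrn : r ≤ n) :
    a + r * h ∈ Icc a (a + n * h) :=
  ⟨by nlinarith, by nlinarith⟩

section QuadratureRules

variable {X : ℕ → ℝ → E} {a h M : ℝ}

theorem norm_sub_taylorSum_quarter_le (hh : 0 < h)
    (hX : ∀ k < 5, ∀ t ∈ Icc a (a + 4 * h),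
      HasDerivWithinAt (X k) (X (k + 1) t) (Icc a (a + 4 * h)) t)
    (hM : ∀ t ∈ Icc a (a + 4 * h), ‖X 5 t‖ ≤ M) :
    (∀ t ∈ Icc a (a + 4 * h), ‖X 0 t - taylorSum X 5 (a + 2 * h) t‖ ≤ 32 * M * h ^ 5) ∧
      ∀ t ∈ Icc a (a + 4 * h),
        ‖X 1 t - taylorSum (fun k ↦ X (k + 1)) 4 (a + 2 * h) t‖ ≤ 16 * M * h ^ 4 := by
  have hc : a + 2 * h ∈ Icc a (a + 4 * h) := add_mul_mem_Icc hh.le zero_le_two (by norm_num)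
  have hL (t) (ht : t ∈ Icc a (a + 4 * h)) : |t - (a + 2 * h)| ≤ 2 * h :=
    abs_sub_le_iff.2 ⟨by linarith [ht.2], by linarith [ht.1]⟩
  constructor
  · intro t ht
    convert norm_sub_taylorSum_le (convex_Icc _ _) hX hc hL hM t ht using 1
    ring
  · intro t ht
    convert norm_sub_taylorSum_le (X := fun k ↦ X (k + 1)) (convex_Icc _ _)
      (fun k hk ↦ hX (k + 1) (by omega)) hc hL hM t ht using 1
    ring

theorem norm_midpoint_velocity_rule_sub_le (hh : 0 < h)
    (hX : ∀ k < 5, ∀ t ∈ Icc a (a + 4 * h),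
      HasDerivWithinAt (X k) (X (k + 1) t) (Icc a (a + 4 * h)) t)
    (hM : ∀ t ∈ Icc a (a + 4 * h), ‖X 5 t‖ ≤ M) :
    ‖(3 / (8 * h)) • (X 0 (a + 4 * h) - X 0 a) - (1 / 4 : ℝ) • (X 1 a + X 1 (a + 4 * h))
      - X 1 (a + 2 * h)‖ ≤ 32 * M * h ^ 4 := by
  obtain ⟨hR₀, hR₁⟩ := norm_sub_taylorSum_quarter_le hh hX hM
  have ha : a ∈ Icc a (a + 4 * h) := ⟨le_rfl, by linarith⟩
  have hb : a + 4 * h ∈ Icc a (a + 4 * h) := ⟨by linarith, le_rfl⟩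
  set R₀ := fun t ↦ X 0 t - taylorSum X 5 (a + 2 * h) t
  set R₁ := fun t ↦ X 1 t - taylorSum (fun k ↦ X (k + 1)) 4 (a + 2 * h) t
  -- the rule is exact on quartic polynomials, so only the Taylor remainders survive
  have hexact : (3 / (8 * h)) • (X 0 (a + 4 * h) - X 0 a)
      - (1 / 4 : ℝ) • (X 1 a + X 1 (a + 4 * h)) - X 1 (a + 2 * h) =
      (3 / (8 * h)) • (R₀ (a + 4 * h) - R₀ a) - (1 / 4 : ℝ) • (R₁ a + R₁ (a + 4 * h)) := by
    simp only [R₀, R₁, taylorSum, Finset.sum_range_succ, Finset.sum_range_zero, Nat.factorial]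
    match_scalars <;> field_simp <;> ring
  rw [hexact]
  grw [norm_sub_le, norm_smul, norm_smul, norm_sub_le, norm_add_le, hR₀ _ ha, hR₀ _ hb,
    hR₁ _ ha, hR₁ _ hb]
  apply le_of_eq
  rw [Real.norm_of_nonneg (by positivity), Real.norm_of_nonneg (by positivity)]
  field_simp
  ring

theorem norm_quarter_point_velocity_rules_sub_le (hh : 0 < h)
    (hX : ∀ k < 5, ∀ t ∈ Icc a (a + 4 * h),
      HasDerivWithinAt (X k) (X (k + 1) t) (Icc a (a + 4 * h)) t)
    (hM : ∀ t ∈ Icc a (a + 4 * h), ‖X 5 t‖ ≤ M) (hM₄ : ‖X 4 (a + 2 * h)‖ ≤ M) {v : E} {δ : ℝ}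
    (hv : ‖X 1 (a + 2 * h) - v‖ ≤ δ) :
    ‖(3 / (8 * h)) • (X 0 (a + 4 * h) - X 0 a) - (1 / 8 : ℝ) • (X 1 a + X 1 (a + 4 * h))
        - (1 / 4 : ℝ) • v - (1 / 4 : ℝ) • (X 1 (a + 4 * h) - X 1 a) - X 1 (a + h)‖
      ≤ M * h ^ 3 / 2 + 52 * M * h ^ 4 + δ / 4 ∧
    ‖(3 / (8 * h)) • (X 0 (a + 4 * h) - X 0 a) - (1 / 8 : ℝ) • (X 1 a + X 1 (a + 4 * h))
        - (1 / 4 : ℝ) • v + (1 / 4 : ℝ) • (X 1 (a + 4 * h) - X 1 a) - X 1 (a + 3 * h)‖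
      ≤ M * h ^ 3 / 2 + 52 * M * h ^ 4 + δ / 4 := by
  obtain ⟨hR₀, hR₁⟩ := norm_sub_taylorSum_quarter_le hh hX hM
  set R₀ := fun t ↦ X 0 t - taylorSum X 5 (a + 2 * h) t
  set R₁ := fun t ↦ X 1 t - taylorSum (fun k ↦ X (k + 1)) 4 (a + 2 * h) t
  have hrule (s : ℝ) (hs : s = 1 ∨ s = -1) :
      ‖(3 / (8 * h)) • (X 0 (a + 4 * h) - X 0 a) - (1 / 8 : ℝ) • (X 1 a + X 1 (a + 4 * h))
        - (1 / 4 : ℝ) • v + (s / 4) • (X 1 (a + 4 * h) - X 1 a) - X 1 (a + (2 + s) * h)‖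
      ≤ M * h ^ 3 / 2 + 52 * M * h ^ 4 + δ / 4 := by
    -- the rule is exact on cubic velocities; the quartic term leaves `(s h³ / 2) • X 4`
    have hcubic : (3 / (8 * h)) • (X 0 (a + 4 * h) - X 0 a)
        - (1 / 8 : ℝ) • (X 1 a + X 1 (a + 4 * h)) - (1 / 4 : ℝ) • v
        + (s / 4) • (X 1 (a + 4 * h) - X 1 a) - X 1 (a + (2 + s) * h) =
        (s * h ^ 3 / 2) • X 4 (a + 2 * h) + ((3 / (8 * h)) • (R₀ (a + 4 * h) - R₀ a)
          - (1 / 8 : ℝ) • (R₁ a + R₁ (a + 4 * h)) + (1 / 4 : ℝ) • (X 1 (a + 2 * h) - v)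
          + (s / 4) • (R₁ (a + 4 * h) - R₁ a) - R₁ (a + (2 + s) * h)) := by
      simp only [R₀, R₁, taylorSum, Finset.sum_range_succ, Finset.sum_range_zero,
        Nat.factorial]
      rcases hs with rfl | rfl <;> match_scalars <;> field_simp <;> ring
    have hs_abs : |s| = 1 := by rcases hs with rfl | rfl <;> norm_num
    have ha : a ∈ Icc a (a + 4 * h) := ⟨le_rfl, by linarith⟩
    have hb : a + 4 * h ∈ Icc a (a + 4 * h) := ⟨by linarith, le_rfl⟩
    have hq : a + (2 + s) * h ∈ Icc a (a + 4 * h) := by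
      apply add_mul_mem_Icc hh.le <;> rcases hs with rfl | rfl <;> norm_num
    rw [hcubic]
    grw [norm_add_le, norm_sub_le, norm_add_le, norm_add_le, norm_sub_le, norm_smul, norm_smul,
      norm_smul, norm_smul, norm_smul, norm_sub_le (R₀ _), norm_add_le (R₁ _),
      norm_sub_le (R₁ _), hR₀ _ ha, hR₀ _ hb, hR₁ _ ha, hR₁ _ hb, hR₁ _ hq, hM₄, hv]
    simp only [Real.norm_eq_abs, abs_mul, abs_div, abs_pow, hs_abs, abs_of_pos hh]
    apply le_of_eq
    field_simp
    ring
  constructor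
  · convert hrule (-1) (Or.inr rfl) using 3 <;> norm_num
    module
  · convert hrule 1 (Or.inl rfl) using 3
    norm_num

end QuadratureRules

/-- Proposition 1 (quarter-point part). For every `M > 0` there
are `K > 0` and `h₀ > 0`, depending only on `M`, such that for every
unit-speed C⁵ curve `x : [a,b] → ℝ²` with all derivatives of order `2,…,5`
bounded by `M` and `h := (b-a)/4 ≤ h₀`, the vectors
`w̃₂ := (3/(8h))(x b - x a) - (1/4)(ẋ a + ẋ b)`, `ṽ₂ := w̃₂/‖w̃₂‖`,
`w̃₁₃ := (3/(8h))(x b - x a) - (1/8)(ẋ a + ẋ b) - (1/4) ṽ₂`,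
`w̃₁ := w̃₁₃ - (1/4)(ẋ b - ẋ a)` and `w̃₃ := w̃₁₃ + (1/4)(ẋ b - ẋ a)` are all
nonzero, with `‖ẋ(a+h) - w̃₁/‖w̃₁‖‖ ≤ K h³` and
`‖ẋ(a+3h) - w̃₃/‖w̃₃‖‖ ≤ K h³`. -/
theorem quarter_point_velocity_estimate :
    ∀ M : ℝ, 0 < M → ∃ K : ℝ, 0 < K ∧ ∃ h₀ : ℝ, 0 < h₀ ∧
      ∀ (a b : ℝ) (x x1 x2 x3 x4 x5 : ℝ → EuclideanSpace ℝ (Fin 2)),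
        a < b → (b - a) / 4 ≤ h₀ →
        (∀ t ∈ Set.Icc a b, HasDerivWithinAt x (x1 t) (Set.Icc a b) t) →
        (∀ t ∈ Set.Icc a b, HasDerivWithinAt x1 (x2 t) (Set.Icc a b) t) →
        (∀ t ∈ Set.Icc a b, HasDerivWithinAt x2 (x3 t) (Set.Icc a b) t) →
        (∀ t ∈ Set.Icc a b, HasDerivWithinAt x3 (x4 t) (Set.Icc a b) t) →
        (∀ t ∈ Set.Icc a b, HasDerivWithinAt x4 (x5 t) (Set.Icc a b) t) →
        ContinuousOn x5 (Set.Icc a b) →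
        (∀ t ∈ Set.Icc a b, ‖x1 t‖ = 1) →
        (∀ t ∈ Set.Icc a b,
          ‖x2 t‖ ≤ M ∧ ‖x3 t‖ ≤ M ∧ ‖x4 t‖ ≤ M ∧ ‖x5 t‖ ≤ M) →
        ∀ h : ℝ, h = (b - a) / 4 →
        ∀ w₂ w₁₃ w₁ w₃ : EuclideanSpace ℝ (Fin 2),
          w₂ = (3 / (8 * h)) • (x b - x a) - (1 / 4 : ℝ) • (x1 a + x1 b) →
          w₁₃ = (3 / (8 * h)) • (x b - x a) - (1 / 8 : ℝ) • (x1 a + x1 b)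
              - (1 / 4 : ℝ) • (‖w₂‖⁻¹ • w₂) →
          w₁ = w₁₃ - (1 / 4 : ℝ) • (x1 b - x1 a) →
          w₃ = w₁₃ + (1 / 4 : ℝ) • (x1 b - x1 a) →
          w₂ ≠ 0 ∧ w₁ ≠ 0 ∧ w₃ ≠ 0 ∧
          ‖x1 (a + h) - ‖w₁‖⁻¹ • w₁‖ ≤ K * h ^ 3 ∧
          ‖x1 (a + 3 * h) - ‖w₃‖⁻¹ • w₃‖ ≤ K * h ^ 3 := by
  intro M hM
  refine ⟨200 * M, by positivity, min 1 (1 / (200 * M)), by positivity, ?_⟩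
  intro a b x x1 x2 x3 x4 x5 hab hh₀ hx hx1 hx2 hx3 hx4 _ hunit hbound h hh w₂ w₁₃ w₁ w₃
    hw₂ hw₁₃ hw₁ hw₃
  obtain rfl : b = a + 4 * h := by linarith
  have h_pos : 0 < h := by linarith
  rw [← hh, le_min_iff, le_div_iff₀ (by positivity)] at hh₀
  obtain ⟨h_le_one, hMh⟩ := hh₀
  have hMh₄ : M * h ^ 4 ≤ M * h ^ 3 :=
    mul_le_mul_of_nonneg_left (pow_le_pow_of_le_one h_pos.le h_le_one (by norm_num)) hM.le
  have hMh₃ : M * h ^ 3 ≤ M * h :=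
    mul_le_mul_of_nonneg_left (pow_le_of_le_one h_pos.le h_le_one three_ne_zero) hM.le
  have hmem (r : ℝ) (hr₀ : 0 ≤ r) (hr₄ : r ≤ 4) : a + r * h ∈ Icc a (a + 4 * h) :=
    add_mul_mem_Icc h_pos.le hr₀ hr₄
  let X : ℕ → ℝ → EuclideanSpace ℝ (Fin 2)
    | 0 => x | 1 => x1 | 2 => x2 | 3 => x3 | 4 => x4 | _ => x5
  have hX : ∀ k < 5, ∀ t ∈ Icc a (a + 4 * h),
      HasDerivWithinAt (X k) (X (k + 1) t) (Icc a (a + 4 * h)) t := by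
    intro k hk
    interval_cases k <;> assumption
  have hX₅ : ∀ t ∈ Icc a (a + 4 * h), ‖X 5 t‖ ≤ M := fun t ht ↦ (hbound t ht).2.2.2
  obtain ⟨hw₂_ne, hv₂_err⟩ := ne_zero_and_norm_sub_inv_norm_smul_le
    (hunit _ (hmem 2 (by norm_num) (by norm_num)))
    (hw₂ ▸ norm_midpoint_velocity_rule_sub_le (X := X) h_pos hX hX₅) (by linarith)
  obtain ⟨hw₁_err, hw₃_err⟩ : ‖w₁ - x1 (a + 1 * h)‖ ≤ _ ∧ ‖w₃ - x1 (a + 3 * h)‖ ≤ _ := by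
    rw [hw₁, hw₃, hw₁₃, one_mul]
    exact norm_quarter_point_velocity_rules_sub_le (X := X) h_pos hX hX₅
      (hbound _ (hmem 2 (by norm_num) (by norm_num))).2.2.1 hv₂_err
  obtain ⟨hw₁_ne, hv₁_err⟩ := ne_zero_and_norm_sub_inv_norm_smul_le
    (hunit _ (hmem 1 (by norm_num) (by norm_num))) hw₁_err (by linarith)
  obtain ⟨hw₃_ne, hv₃_err⟩ := ne_zero_and_norm_sub_inv_norm_smul_le
    (hunit _ (hmem 3 (by norm_num) (by norm_num))) hw₃_err (by linarith)
  rw [one_mul] at hv₁_err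
  exact ⟨hw₂_ne, hw₁_ne, hw₃_ne, hv₁_err.trans (by linarith [show 0 ≤ M * h ^ 3 by positivity]),
    hv₃_err.trans (by linarith [show 0 ≤ M * h ^ 3 by positivity])⟩
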